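/- arXiv:math/0210201 — 4 statements merged into one kernel-verified Lean document; each statement's English description precedes it below -/
import Mathlib

section
/- For every integer m ≥ 2 and every integer k with 1 ≤ k < m, the traces of the k-th powers of consecutive Polynacci matrices agree: trace(A_m^k) = trace(A_{m−1}^k). -/
/-- The Polynacci matrix `A_m`: first column all ones, first superdiagonal all ones,
all other entries zero (0-indexed). -/
def polyA (m : ℕ) : Matrix (Fin m) (Fin m) ℤ :=
  Matrix.of fun i j => if j.val = 0 then 1 else if j.val = i.val + 1 then 1 else 0

/-!
Multiplying by `A_n` on the left replaces row `i` by row `0` plus row `i + 1` (row `n`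
being zero). Hence the row-`0` part of `A_n ^ k` doubles at each step, and by induction
`(A_n ^ k) i j = [j = i + k] + [j < k] 2 ^ (k - 1 - j)` as long as the shift `i + k` has not
run past the last column by more than `j`. For `1 ≤ k ≤ n` the diagonal is therefore
`2 ^ (k - 1 - i)` for `i < k` and `0` otherwise, so `trace (A_n ^ k) = 2 ^ k - 1` does not
depend on `n`.
-/

theorem polyA_mul_apply {n : ℕ} {o : Type*} (B : Matrix (Fin n) o ℤ) (i : Fin n) (j : o) :
    (polyA n * B) i j =
      B ⟨0, i.pos⟩ j + if h : i.val + 1 < n then B ⟨i.val + 1, h⟩ j else 0 := by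
  have hsplit : ∀ l : Fin n, polyA n i l * B l j =
      (if l = ⟨0, i.pos⟩ then B l j else 0) + (if l.val = i.val + 1 then B l j else 0) := by
    intro l
    simp only [polyA, Matrix.of_apply, Fin.ext_iff]
    split_ifs <;> omega
  rw [Matrix.mul_apply, Finset.sum_congr rfl fun l _ => hsplit l, Finset.sum_add_distrib,
    Fintype.sum_ite_eq']
  split_ifs with h
  · rw [Finset.sum_eq_single ⟨i.val + 1, h⟩] <;> simp +contextual [Fin.ext_iff]
  · rw [Finset.sum_eq_zero fun l _ => if_neg (by have := l.isLt; omega)]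

theorem ite_two_pow_mul_two_add_ite (j k : ℕ) :
    (if j < k then (2 : ℤ) ^ (k - 1 - j) else 0) * 2 + (if j = k then 1 else 0) =
      if j < k + 1 then 2 ^ (k - j) else 0 := by
  rcases lt_trichotomy j k with hjk | rfl | hjk
  · rw [if_pos hjk, if_neg hjk.ne, if_pos (Nat.lt_succ_of_lt hjk), ← pow_succ, add_zero]
    congr 1; omega
  · simp
  · rw [if_neg (by omega), if_neg (by omega), if_neg (by omega)]; simp

theorem polyA_pow_apply {n : ℕ} (k : ℕ) (i j : Fin n) (hij : i.val + k ≤ n + j.val) :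
    (polyA n ^ k) i j =
      (if j.val = i.val + k then 1 else 0) + if j.val < k then 2 ^ (k - 1 - j.val) else 0 := by
  induction k generalizing i with
  | zero => simp [Matrix.one_apply, Fin.ext_iff, eq_comm]
  | succ k ih =>
    rw [pow_succ', polyA_mul_apply, ih _ (by simp; omega), Nat.add_sub_cancel,
      ← ite_two_pow_mul_two_add_ite, Fin.val_mk, zero_add]
    by_cases hi : i.val + 1 < n
    · rw [dif_pos hi, ih _ (by simp; omega), show i.val + 1 + k = i.val + (k + 1) by omega]
      ring
    · have hjk : k ≤ j.val := by omega
      rw [dif_neg hi, if_neg (by omega : ¬ j.val = i.val + (k + 1)),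
        if_neg (by omega : ¬ j.val < k)]
      ring

theorem polyA_pow_diag {n k : ℕ} (hk0 : 0 < k) (hk : k ≤ n) (i : Fin n) :
    (polyA n ^ k).diag i = if i.val < k then 2 ^ (k - 1 - i.val) else 0 := by
  rw [Matrix.diag_apply, polyA_pow_apply k i i (by omega),
    if_neg (by omega : ¬ i.val = i.val + k), zero_add]

theorem polyA_trace_pow {n k : ℕ} (hk0 : 0 < k) (hk : k ≤ n) :
    (polyA n ^ k).trace = 2 ^ k - 1 := by
  have hgeom : ∑ i ∈ Finset.range k, (2 : ℤ) ^ i = 2 ^ k - 1 := by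
    simpa using geom_sum_mul (2 : ℤ) k
  rw [Matrix.trace, Finset.sum_congr rfl fun i _ => polyA_pow_diag hk0 hk i,
    Fin.sum_univ_eq_sum_range (fun i => if i < k then (2 : ℤ) ^ (k - 1 - i) else 0),
    ← Finset.sum_range_add_sum_Ico _ hk, Finset.sum_eq_zero (s := Finset.Ico k n), add_zero]
  · rw [← Finset.sum_range_reflect, ← hgeom]
    refine Finset.sum_congr rfl fun i hi => ?_
    rw [Finset.mem_range] at hi
    rw [if_pos (by omega), show k - 1 - (k - 1 - i) = i by omega]
  · intro i hi
    rw [Finset.mem_Ico] at hi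
    rw [if_neg (by omega)]

theorem polyA_trace_pow_stable_general (m : ℕ) (k : ℕ) (hk1 : 1 ≤ k) (hk2 : k < m) :
    ((polyA m) ^ k).trace = ((polyA (m - 1)) ^ k).trace := by
  rw [polyA_trace_pow hk1 hk2.le, polyA_trace_pow hk1 (Nat.le_sub_one_of_lt hk2)]

theorem polyA_trace_pow_stable (m : ℕ) (hm : 2 ≤ m) (k : ℕ) (hk1 : 1 ≤ k) (hk2 : k < m) :
    ((polyA m) ^ k).trace = ((polyA (m - 1)) ^ k).trace :=
  polyA_trace_pow_stable_general m k hk1 hk2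
end

section
/- For every integer m ≥ 1 and every integer k with 1 ≤ k ≤ m, trace(A_m^k) = trace(A_k^k). -/
/-!
Right multiplication by `A_m` shifts every column one step to the right and writes the row sums
into column `0`, while left multiplication gives `(A_m w)_i = w_0 + w_{i+1}`, so the `i`-th row
sum of `A_m ^ t` is `2 ^ t` as long as `i + t < m`. Together, `(A_m ^ k)_{ii} = 2 ^ (k - 1 - i)`
for `i < k ≤ m` and `0` for `i ≥ k`. Hence `trace (A_m ^ k) = 2 ^ k - 1` for every `m ≥ k`.
-/

open Matrix Finset

lemma polyA_mulVec_apply {m : ℕ} (w : Fin m → ℤ) (i : Fin m) (hi : i.val + 1 < m) :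
    (polyA m *ᵥ w) i = w ⟨0, i.pos⟩ + w ⟨i.val + 1, hi⟩ := by
  refine (Fintype.sum_eq_add (f := fun l => polyA m i l * w l) ⟨0, i.pos⟩ ⟨i.val + 1, hi⟩
    (by simp [Fin.ext_iff]) fun l hl => ?_).trans ?_
  · simp only [ne_eq, Fin.ext_iff] at hl
    simp [polyA, hl.1, hl.2]
  · simp [polyA]

lemma polyA_pow_mulVec_one_apply {m : ℕ} (t : ℕ) (i : Fin m) (hi : i.val + t < m) :
    (polyA m ^ t *ᵥ 1) i = 2 ^ t := by
  induction t generalizing i with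
  | zero => simp
  | succ t ih =>
    rw [pow_succ', ← mulVec_mulVec, polyA_mulVec_apply _ _ (by omega),
      ih _ (by dsimp only; omega), ih _ (by dsimp only; omega), pow_succ]
    ring

lemma mul_polyA_apply_zero {n m : ℕ} (B : Matrix (Fin n) (Fin m) ℤ) (i : Fin n) (j : Fin m)
    (hj : j.val = 0) : (B * polyA m) i j = (B *ᵥ 1) i := by
  simp [mul_apply, mulVec, dotProduct, polyA, hj]

lemma mul_polyA_apply_of_pos {n m : ℕ} (B : Matrix (Fin n) (Fin m) ℤ) (i : Fin n) (j : Fin m)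
    (hj : 0 < j.val) : (B * polyA m) i j = B i ⟨j.val - 1, by omega⟩ := by
  rw [mul_apply, Fintype.sum_eq_single ⟨j.val - 1, by omega⟩]
  · rw [polyA, of_apply, if_neg hj.ne', if_pos (by dsimp only; omega), mul_one]
  · intro l hl
    simp only [ne_eq, Fin.ext_iff] at hl
    have : j.val ≠ l.val + 1 := by omega
    simp [polyA, hj.ne', this]

lemma mul_polyA_pow_apply {n m : ℕ} (B : Matrix (Fin n) (Fin m) ℤ) (s : ℕ) (i : Fin n)
    (j : Fin m) (hs : s ≤ j.val) : (B * polyA m ^ s) i j = B i ⟨j.val - s, by omega⟩ := by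
  induction s generalizing j with
  | zero => simp
  | succ s ih =>
    rw [pow_succ, ← Matrix.mul_assoc, mul_polyA_apply_of_pos _ _ _ (by omega),
      ih _ (by dsimp only; omega)]
    congr 2
    dsimp only
    omega

lemma polyA_pow_apply_self_of_lt {m k : ℕ} (hkm : k ≤ m) (i : Fin m) (hik : i.val < k) :
    (polyA m ^ k) i i = 2 ^ (k - 1 - i.val) := by
  obtain ⟨t, rfl⟩ : ∃ t, k = t + 1 + i.val := ⟨k - 1 - i.val, by omega⟩
  rw [pow_add, pow_succ, mul_polyA_pow_apply _ _ _ _ le_rfl,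
    mul_polyA_apply_zero _ _ _ (by simp), polyA_pow_mulVec_one_apply _ _ (by omega)]
  congr 1
  omega

lemma polyA_pow_apply_self_of_le {m k : ℕ} (hk : 0 < k) (i : Fin m) (hki : k ≤ i.val) :
    (polyA m ^ k) i i = 0 := by
  rw [← Matrix.one_mul (polyA m ^ k), mul_polyA_pow_apply _ _ _ _ hki,
    one_apply_ne (Fin.ne_of_val_ne (by dsimp only; omega))]

lemma trace_polyA_pow {m k : ℕ} (hk : 0 < k) (hkm : k ≤ m) :
    (polyA m ^ k).trace = 2 ^ k - 1 := by
  have hdiag : ∀ i : Fin m, (polyA m ^ k) i i = if i.val < k then 2 ^ (k - 1 - i.val) else 0 :=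
    fun i => by
      split_ifs with h
      · exact polyA_pow_apply_self_of_lt hkm i h
      · exact polyA_pow_apply_self_of_le hk i (not_lt.mp h)
  calc (polyA m ^ k).trace
      = ∑ n ∈ range m, if n < k then (2 : ℤ) ^ (k - 1 - n) else 0 := by
        simp only [trace, Matrix.diag, hdiag]
        exact Fin.sum_univ_eq_sum_range (fun n => if n < k then (2 : ℤ) ^ (k - 1 - n) else 0) m
    _ = ∑ n ∈ range k, (2 : ℤ) ^ (k - 1 - n) := by
        rw [← sum_range_add_sum_Ico _ hkm, sum_ite_of_true (fun n hn => mem_range.mp hn),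
          sum_ite_of_false (fun n hn => (mem_Ico.mp hn).1.not_gt), sum_const_zero, add_zero]
    _ = 2 ^ k - 1 := by
        rw [sum_range_reflect (fun n => (2 : ℤ) ^ n) k, ← geom_sum_mul]
        norm_num

theorem polyA_trace_pow_eq_general (m : ℕ) (k : ℕ) (hk1 : 1 ≤ k) (hk2 : k ≤ m) :
    ((polyA m) ^ k).trace = ((polyA k) ^ k).trace := by
  rw [trace_polyA_pow hk1 hk2, trace_polyA_pow hk1 le_rfl]

theorem polyA_trace_pow_eq (m : ℕ) (hm : 1 ≤ m) (k : ℕ) (hk1 : 1 ≤ k) (hk2 : k ≤ m) :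
    ((polyA m) ^ k).trace = ((polyA k) ^ k).trace :=
  polyA_trace_pow_eq_general m k hk1 hk2
end

section
/- For every integer m ≥ 1, trace(B_m^m) = 2m − 1. -/
/-!
The powers `B^k` with `k ≤ m` have an explicit form. With 0-based indices, `B` sends `e_j` to
`e_{j+1}` for `j < m - 1` and `e_{m-1}` to `v = e_0 - e_1 - ⋯ - e_{m-1}`; one more step gives
`B v = 2 e_1 - e_0`, and from then on `B (2 e_r - e_{r-1}) = 2 e_{r+1} - e_r`. Hence column `j` of
`B^m` is `2 e_j - e_{j-1}` for `j ≥ 1` and `v` for `j = 0`, so the diagonal of `B^m` is `1, 2, …, 2`.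
-/

/-- The matrix `B_m`, the inverse of the Polynacci matrix: `B[1][m] = 1`,
`B[i][m] = -1` for `2 ≤ i ≤ m`, `B[i][i-1] = 1` for `2 ≤ i ≤ m`, other entries zero. -/
def polyB (m : ℕ) : Matrix (Fin m) (Fin m) ℤ :=
  Matrix.of fun i j =>
    if i.val = 0 then (if j.val = m - 1 then 1 else 0)
    else if j.val = m - 1 then -1
    else if j.val + 1 = i.val then 1 else 0

/-- For `k ≤ m`, column `j` of `polyB m ^ k` is `e_{j+k}`, then `v`, then `2 e_r - e_{r-1}` with `r = j + k - m`. -/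
def polyBPow (m k : ℕ) : Matrix (Fin m) (Fin m) ℤ :=
  Matrix.of fun i j =>
    if j.val + k < m then (if i.val = j.val + k then 1 else 0)
    else if j.val + k = m then (if i.val = 0 then 1 else -1)
    else if i.val = j.val + k - m then 2
    else if i.val + 1 = j.val + k - m then -1 else 0

lemma polyB_mul_apply {m : ℕ} (hm : 1 ≤ m) (D : Matrix (Fin m) (Fin m) ℤ) (i j : Fin m) :
    (polyB m * D) i j =
      if i.val = 0 then D ⟨m - 1, by omega⟩ j
      else D ⟨i.val - 1, by omega⟩ j - D ⟨m - 1, by omega⟩ j := by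
  rw [Matrix.mul_apply]
  by_cases hi : i.val = 0
  · have row : ∀ l : Fin m, polyB m i l * D l j =
        if l = (⟨m - 1, by omega⟩ : Fin m) then D l j else 0 := by
      intro l
      simp only [polyB, Matrix.of_apply, hi, if_true, Fin.ext_iff]
      split_ifs <;> simp_all
    simp [hi, Finset.sum_congr rfl (fun l _ => row l)]
  · have row : ∀ l : Fin m, polyB m i l * D l j =
        (if l = (⟨i.val - 1, by omega⟩ : Fin m) then D l j else 0)
        + (if l = (⟨m - 1, by omega⟩ : Fin m) then -D l j else 0) := by
      intro l
      simp only [polyB, Matrix.of_apply, hi, if_false, Fin.ext_iff]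
      split_ifs <;> simp_all <;> omega
    simp [hi, Finset.sum_congr rfl (fun l _ => row l), Finset.sum_add_distrib, sub_eq_add_neg]

lemma polyB_pow_eq_polyBPow {m k : ℕ} (hk : k ≤ m) : polyB m ^ k = polyBPow m k := by
  induction k with
  | zero =>
    ext i j
    simp [polyBPow, Matrix.one_apply, Fin.ext_iff]
  | succ k ih =>
    rw [pow_succ', ih (by omega)]
    ext i j
    rw [polyB_mul_apply (by omega)]
    simp only [polyBPow, Matrix.of_apply]
    split_ifs <;> omega

lemma polyBPow_self_apply_diag {m : ℕ} (j : Fin m) :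
    polyBPow m m j j = if j.val = 0 then 1 else 2 := by
  simp only [polyBPow, Matrix.of_apply]
  split_ifs <;> omega

theorem polyB_trace_pow_self (m : ℕ) (hm : 1 ≤ m) :
    ((polyB m) ^ m).trace = 2 * (m : ℤ) - 1 := by
  obtain ⟨n, rfl⟩ : ∃ n, m = n + 1 := ⟨m - 1, by omega⟩
  rw [polyB_pow_eq_polyBPow le_rfl, Matrix.trace, Fin.sum_univ_succ]
  simp only [Matrix.diag_apply, polyBPow_self_apply_diag, Fin.val_zero, Fin.val_succ, if_true,
    Nat.succ_ne_zero, if_false, Finset.sum_const, Finset.card_univ, Fintype.card_fin, nsmul_eq_mul]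
  push_cast
  ring
end

section
/- For every integer m ≥ 1, the ordinary generating function of the reflected generalized Polynacci sequence Ũ_n^(m) = trace(B_m^n) satisfies, as an identity of formal power series over ℤ: (∑_{n≥0} Ũ_n^(m) x^n) · (1 + x + x² + ⋯ + x^{m−1} − x^m) = m + (m−1)x + (m−2)x² + ⋯ + x^{m−1}, i.e. the product equals ∑_{j=0}^{m−1} (m−j) x^j. -/
open Matrix Finset PowerSeries

section PolyB

variable {k : ℕ}

lemma polyB_mulVec_single_castSucc (j : Fin k) :
    polyB (k + 1) *ᵥ Pi.single j.castSucc 1 = Pi.single j.succ 1 := by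
  ext i
  simp only [mulVec_single_one, col_apply, polyB, of_apply, Pi.single_apply, Fin.ext_iff,
    Fin.val_castSucc, Fin.val_succ, add_tsub_cancel_right]
  split_ifs <;> omega

lemma polyB_mulVec_single_last :
    polyB (k + 1) *ᵥ Pi.single (Fin.last k) 1 = 2 • Pi.single 0 1 - 1 := by
  ext i
  simp only [mulVec_single_one, col_apply, polyB, of_apply, Pi.single_apply, Fin.ext_iff,
    Fin.val_last, add_tsub_cancel_right, Fin.val_zero, Pi.sub_apply, Pi.smul_apply, Pi.one_apply]
  simp only [nsmul_eq_mul, Nat.cast_ofNat]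
  split_ifs <;> omega

lemma sum_univ_pi_single_succ {R : Type*} [Ring R] :
    ∑ j : Fin k, (Pi.single j.succ 1 : Fin (k + 1) → R) = 1 - Pi.single 0 1 := by
  rw [eq_sub_iff_add_eq', ← Fin.sum_univ_succ (f := fun j => (Pi.single j 1 : Fin (k + 1) → R)),
    Finset.univ_sum_single]
  rfl

lemma polyB_mulVec_one : polyB (k + 1) *ᵥ 1 = Pi.single 0 1 := by
  conv_lhs => rw [← Finset.univ_sum_single (1 : Fin (k + 1) → ℤ)]
  simp only [Pi.one_apply, Fin.sum_univ_castSucc, mulVec_add, mulVec_sum,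
    polyB_mulVec_single_castSucc, polyB_mulVec_single_last, sum_univ_pi_single_succ]
  abel

lemma polyB_pow_mulVec_single_zero (j : Fin (k + 1)) :
    polyB (k + 1) ^ (j : ℕ) *ᵥ Pi.single 0 1 = Pi.single j 1 := by
  induction j using Fin.induction with
  | zero => rw [Fin.val_zero, pow_zero, one_mulVec]
  | succ j ih =>
    rw [Fin.val_succ, pow_succ', ← mulVec_mulVec, ← Fin.val_castSucc, ih,
      polyB_mulVec_single_castSucc]

lemma polyB_pow_succ_mulVec_single_zero :
    polyB (k + 1) ^ (k + 1) *ᵥ Pi.single 0 1 = 2 • Pi.single 0 1 - 1 := by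
  have h := polyB_pow_mulVec_single_zero (Fin.last k)
  rw [Fin.val_last] at h
  rw [pow_succ', ← mulVec_mulVec, h, polyB_mulVec_single_last]

lemma polyB_pow_succ_mulVec_one (j : Fin (k + 1)) :
    polyB (k + 1) ^ ((j : ℕ) + 1) *ᵥ 1 = Pi.single j 1 := by
  rw [pow_succ, ← mulVec_mulVec, polyB_mulVec_one, polyB_pow_mulVec_single_zero]

lemma polyB_pow_apply_self (n : ℕ) (j : Fin (k + 1)) :
    (polyB (k + 1) ^ n) j j = (polyB (k + 1) ^ (n + j) *ᵥ Pi.single 0 1) j := by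
  rw [pow_add, ← mulVec_mulVec, polyB_pow_mulVec_single_zero, mulVec_single_one, col_apply]

-- `e₀` is a cyclic vector of `polyB`: its powers reach every basis vector.
lemma eq_one_of_commute_polyB {M : Matrix (Fin (k + 1)) (Fin (k + 1)) ℤ}
    (hM : Commute M (polyB (k + 1))) (h₀ : M *ᵥ Pi.single 0 1 = Pi.single 0 1) : M = 1 := by
  refine ext_of_mulVec_single fun j => ?_
  rw [one_mulVec, ← polyB_pow_mulVec_single_zero, mulVec_mulVec, (hM.pow_right _).eq,
    ← mulVec_mulVec, h₀]

theorem sum_range_polyB_pow_succ : ∑ j ∈ range (k + 1), polyB (k + 1) ^ (j + 1) = 1 := by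
  refine eq_one_of_commute_polyB (Commute.sum_left _ _ _ fun j _ => Commute.pow_left rfl _) ?_
  rw [sum_mulVec, sum_range_succ, polyB_pow_succ_mulVec_single_zero,
    ← Fin.sum_univ_eq_sum_range (fun j => polyB (k + 1) ^ (j + 1) *ᵥ Pi.single 0 1)]
  simp only [← Fin.val_succ, polyB_pow_mulVec_single_zero, sum_univ_pi_single_succ]
  abel

lemma polyB_pow_mulVec_one_apply_of_le (s : ℕ) (j : Fin (k + 1)) (h : s ≤ j) :
    (polyB (k + 1) ^ s *ᵥ 1) j = if s = 0 then 1 else 0 := by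
  cases s with
  | zero => rw [pow_zero, one_mulVec, if_pos rfl, Pi.one_apply]
  | succ t =>
    rw [show polyB (k + 1) ^ (t + 1) *ᵥ 1 = Pi.single ⟨t, by omega⟩ 1 from
      polyB_pow_succ_mulVec_one (k := k) ⟨t, by omega⟩, Pi.single_apply,
      if_neg (Fin.ne_of_val_ne (by simp; omega)), if_neg t.succ_ne_zero]

lemma polyB_pow_apply_self_of_pos_of_le {n : ℕ} (hn : 1 ≤ n) (hnk : n ≤ k) (j : Fin (k + 1)) :
    (polyB (k + 1) ^ n) j j = if (j : ℕ) + n = k + 1 then -1 else 0 := by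
  rw [polyB_pow_apply_self]
  rcases Nat.lt_or_ge (n + j) (k + 1) with hlt | hge
  · rw [show polyB (k + 1) ^ (n + j) *ᵥ Pi.single 0 1 = Pi.single ⟨n + j, hlt⟩ 1 from
      polyB_pow_mulVec_single_zero (k := k) ⟨n + j, hlt⟩, Pi.single_apply,
      if_neg (Fin.ne_of_val_ne (by simp; omega)), if_neg (by omega)]
  · obtain ⟨s, hs⟩ : ∃ s, n + j = s + (k + 1) := ⟨n + j - (k + 1), by omega⟩
    rw [hs, pow_add, ← mulVec_mulVec, polyB_pow_succ_mulVec_single_zero, mulVec_sub, mulVec_smul,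
      show polyB (k + 1) ^ s *ᵥ Pi.single 0 1 = Pi.single ⟨s, by omega⟩ 1 from
        polyB_pow_mulVec_single_zero (k := k) ⟨s, by omega⟩, Pi.sub_apply, Pi.smul_apply,
      Pi.single_apply, if_neg (Fin.ne_of_val_ne (by simp; omega)),
      polyB_pow_mulVec_one_apply_of_le s j (by omega)]
    rw [smul_zero, zero_sub, apply_ite Neg.neg, neg_zero]
    exact if_congr (by omega) rfl rfl

lemma trace_polyB_pow_of_pos_of_le {n : ℕ} (hn : 1 ≤ n) (hnk : n ≤ k) :
    trace (polyB (k + 1) ^ n) = -1 := by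
  simp only [trace, diag_apply, polyB_pow_apply_self_of_pos_of_le hn hnk]
  rw [Fin.sum_univ_eq_sum_range (fun j => if j + n = k + 1 then (-1 : ℤ) else 0),
    sum_congr rfl fun j _ => if_congr (show j + n = k + 1 ↔ k + 1 - n = j by omega) rfl rfl,
    sum_ite_eq, if_pos (mem_range.2 (by omega))]

lemma sum_range_trace_polyB_pow {n : ℕ} (hn : n ≤ k) :
    ∑ j ∈ range (n + 1), trace (polyB (k + 1) ^ j) = k + 1 - n := by
  induction n with
  | zero => simp [trace_one]
  | succ n ih =>
    rw [sum_range_succ, ih (by omega), trace_polyB_pow_of_pos_of_le (by omega) hn]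
    push_cast
    ring

lemma sum_range_trace_polyB_pow_sub {n : ℕ} (hn : k + 1 ≤ n) :
    ∑ j ∈ range (k + 1), trace (polyB (k + 1) ^ (n - j)) =
      trace (polyB (k + 1) ^ (n - (k + 1))) := by
  obtain ⟨t, rfl⟩ := Nat.exists_eq_add_of_le' hn
  have hpow : ∀ j ∈ range (k + 1),
      polyB (k + 1) ^ (t + (k + 1) - (k + 1 - 1 - j)) =
        polyB (k + 1) ^ t * polyB (k + 1) ^ (j + 1) := by
    intro j hj
    rw [← pow_add]
    congr 1
    have := mem_range.1 hj
    omega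
  rw [← trace_sum, ← sum_range_reflect, sum_congr rfl hpow, ← mul_sum, sum_range_polyB_pow_succ,
    mul_one, Nat.add_sub_cancel]

end PolyB

section PowerSeries

variable {R : Type*} [Semiring R]

lemma coeff_mk_mul_sum_range_X_pow (a : ℕ → R) (m n : ℕ) :
    coeff n (mk a * ∑ j ∈ range m, X ^ j) = ∑ j ∈ range (min m (n + 1)), a (n - j) := by
  simp only [mul_sum, map_sum, coeff_mul_X_pow', coeff_mk]
  rw [← sum_filter]
  congr 1
  ext j
  simp only [mem_filter, mem_range]
  omega

lemma coeff_sum_range_C_mul_X_pow (c : ℕ → R) (m n : ℕ) :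
    coeff n (∑ j ∈ range m, C (c j) * X ^ j) = if n < m then c n else 0 := by
  simp only [map_sum, coeff_C_mul_X_pow, sum_ite_eq, mem_range]

end PowerSeries

open PowerSeries in
theorem reflected_polynacci_ogf (m : ℕ) (hm : 1 ≤ m) :
    (PowerSeries.mk fun n => ((polyB m) ^ n).trace) *
        (1 + (∑ j ∈ Finset.Icc 1 (m - 1), (X : ℤ⟦X⟧) ^ j) - (X : ℤ⟦X⟧) ^ m) =
      ∑ j ∈ Finset.range m, PowerSeries.C ((m : ℤ) - (j : ℤ)) * (X : ℤ⟦X⟧) ^ j := by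
  obtain ⟨k, rfl⟩ := Nat.exists_eq_add_of_le' hm
  have hgeom : 1 + ∑ j ∈ Icc 1 k, X ^ j = ∑ j ∈ range (k + 1), (X : ℤ⟦X⟧) ^ j := by
    rw [sum_range_eq_add_Ico _ (by omega : 0 < k + 1), pow_zero, Ico_add_one_right_eq_Icc]
  rw [Nat.add_sub_cancel, hgeom]
  ext n
  rw [mul_sub, map_sub, coeff_mk_mul_sum_range_X_pow, coeff_mul_X_pow', coeff_mk,
    coeff_sum_range_C_mul_X_pow]
  rcases Nat.lt_or_ge n (k + 1) with hn | hn
  · rw [min_eq_right hn, if_neg (by omega), if_pos hn, sub_zero]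
    have hreflect := sum_range_reflect (fun j => trace (polyB (k + 1) ^ j)) (n + 1)
    rw [Nat.add_sub_cancel] at hreflect
    rw [hreflect, sum_range_trace_polyB_pow (by omega)]
    push_cast
    ring
  · rw [min_eq_left (by omega), if_pos hn, if_neg (by omega), sum_range_trace_polyB_pow_sub hn,
      sub_self]
end
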